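/- Let d be a positive integer, 𝒯 a Krull–Schmidt, Hom-finite, (d+1)-Calabi–Yau triangulated category over an algebraically closed field k, R a basic d-rigid object of 𝒯, and X ∈ pr(R). Then the following are equivalent: (1) X is R[1]-rigid; (2) X is rigid; (3) X is d-rigid. -/

import Mathlib

/-!
Formalization of results from "Relative rigid objects in triangulated categories"
by Fu–Geng–Liu.  Throughout, `C` is a Krull–Schmidt, Hom-finite, `k`-linear
triangulated category over an algebraically closed field `k` (Krull–Schmidt is
encoded as: Hom-finite over `k` together with idempotent completeness), with
suspension functor `⟦1⟧`.
-/

open CategoryTheory Limits Pretriangulated Opposite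

universe w v u

namespace RelRigid

variable {k : Type w} [Field k] [IsAlgClosed k]
variable {C : Type u} [Category.{v} C] [Preadditive C] [CategoryTheory.Linear k C]
  [HasZeroObject C] [HasShift C ℤ] [∀ n : ℤ, (shiftFunctor C n).Additive]
  [Pretriangulated C] [HasFiniteBiproducts C] [IsIdempotentComplete C]
  [∀ X Y : C, Module.Finite k (X ⟶ Y)]

/-- `X` belongs to `add R`: it is a direct summand of a finite direct sum of copies of `R`. -/
def InAdd (R X : C) : Prop :=
  ∃ (n : ℕ) (s : X ⟶ ⨁ (fun _ : Fin n => R)) (p : (⨁ (fun _ : Fin n => R)) ⟶ X),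
    s ≫ p = 𝟙 X

/-- `Y` is a direct summand of `X`. -/
def IsSummand (Y X : C) : Prop := ∃ (s : Y ⟶ X) (p : X ⟶ Y), s ≫ p = 𝟙 Y

/-- The morphism `f` factors through `add Z`. -/
def FactorsThroughAdd (Z : C) {X Y : C} (f : X ⟶ Y) : Prop :=
  ∃ (Z' : C) (_ : InAdd Z Z') (g : X ⟶ Z') (h : Z' ⟶ Y), g ≫ h = f

/-- `X` is rigid: `Hom(X, X[1]) = 0`. -/
def IsRigidObj (X : C) : Prop := ∀ f : X ⟶ X⟦(1 : ℤ)⟧, f = 0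

/-- `X` is `R[1]`-rigid: `R[1](X, X[1]) = 0`, i.e. every morphism `X ⟶ X[1]`
factoring through `add (R[1])` vanishes. -/
def IsRelRigid (R X : C) : Prop :=
  ∀ f : X ⟶ X⟦(1 : ℤ)⟧, FactorsThroughAdd (R⟦(1 : ℤ)⟧) f → f = 0

/-- `X ∈ pr(R)`: there is a triangle `R₁ ⟶ R₀ ⟶ X ⟶ R₁[1]` with `R₀, R₁ ∈ add R`. -/
def InPr (R X : C) : Prop :=
  ∃ (R₁ R₀ : C) (_ : InAdd R R₁) (_ : InAdd R R₀) (f : R₁ ⟶ R₀) (g : R₀ ⟶ X)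
    (h : X ⟶ R₁⟦(1 : ℤ)⟧), Triangle.mk f g h ∈ distTriang C

/-- `X` is maximal `R[1]`-rigid with respect to `pr(R)`: `X ∈ pr(R)` is `R[1]`-rigid and
any `Z ∈ pr(R)` with `R[1](X ⊕ Z, (X ⊕ Z)[1]) = 0` satisfies `Z ∈ add X`. -/
def IsMaxRelRigid (R X : C) : Prop :=
  InPr R X ∧ IsRelRigid R X ∧ ∀ Z : C, InPr R Z → IsRelRigid R (X ⊞ Z) → InAdd X Z

/-- `X` is indecomposable. -/
def Indecomp (X : C) : Prop :=
  ¬ IsZero X ∧ ∀ A B : C, Nonempty (X ≅ A ⊞ B) → IsZero A ∨ IsZero B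

/-- `f` is a decomposition of `X` into indecomposable objects. -/
def IsDecomp (X : C) {n : ℕ} (f : Fin n → C) : Prop :=
  (∀ i, Indecomp (f i)) ∧ Nonempty (X ≅ ⨁ f)

/-- `|X| = n`: `X` has exactly `n` pairwise non-isomorphic indecomposable direct summands. -/
def NumIndec (X : C) (n : ℕ) : Prop :=
  ∃ g : Fin n → C, (∀ i, Indecomp (g i)) ∧ (∀ i j : Fin n, Nonempty (g i ≅ g j) → i = j) ∧
    ∀ Y : C, Indecomp Y → (IsSummand Y X ↔ ∃ i : Fin n, Nonempty (Y ≅ g i))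

/-- `X` is basic: it decomposes into pairwise non-isomorphic indecomposable objects. -/
def IsBasic (X : C) : Prop :=
  ∃ (n : ℕ) (f : Fin n → C), IsDecomp X f ∧ ∀ i j : Fin n, Nonempty (f i ≅ f j) → i = j

/-- `Hom(R, Y)` is a left module over `End (op R)` (equivalently, a right module over the
endomorphism algebra `Γ = End R`), via precomposition. -/
instance homModule (R Y : C) : Module (End (op R)) (R ⟶ Y) where
  smul g f := g.unop ≫ f
  one_smul f := by show (1 : End (op R)).unop ≫ f = f; simp [End.one_def]
  mul_smul g h f := by
    show (g * h).unop ≫ f = g.unop ≫ h.unop ≫ f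
    simp [End.mul_def]
  smul_zero g := by show g.unop ≫ (0 : _ ⟶ _) = 0; simp
  smul_add g f₁ f₂ := by
    show g.unop ≫ (f₁ + f₂) = g.unop ≫ f₁ + g.unop ≫ f₂
    simp
  add_smul g h f := by
    show (g + h).unop ≫ f = g.unop ≫ f + h.unop ≫ f
    rw [show (g + h).unop = g.unop + h.unop from rfl, Preadditive.add_comp]
  zero_smul f := by show (0 : End (op R)).unop ≫ f = 0; simp

/-- Postcomposition `Hom(R, X) → Hom(R, Y)` with `φ : X ⟶ Y`, i.e. the action of the
functor `Hom(R, −)` on morphisms; it is linear over `End (op R)`. -/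
def homMap (R : C) {X Y : C} (φ : X ⟶ Y) : (R ⟶ X) →ₗ[End (op R)] (R ⟶ Y) where
  toFun u := u ≫ φ
  map_add' u v := by simp [Preadditive.add_comp]
  map_smul' g u := by
    show (g.unop ≫ u) ≫ φ = g.unop ≫ (u ≫ φ)
    simp [Category.assoc]

/-- `T` is a cluster tilting object:
`add T = {X : Hom(T, X[1]) = 0} = {X : Hom(X, T[1]) = 0}`. -/
def IsClusterTilting (T : C) : Prop :=
  (∀ X : C, InAdd T X ↔ ∀ f : T ⟶ X⟦(1 : ℤ)⟧, f = 0) ∧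
  (∀ X : C, InAdd T X ↔ ∀ f : X ⟶ T⟦(1 : ℤ)⟧, f = 0)

/-- `T` is maximal `R[1]`-rigid with respect to the whole category `C`. -/
def IsMaxRelRigidAll (R T : C) : Prop :=
  IsRelRigid R T ∧ ∀ Z : C, IsRelRigid R (T ⊞ Z) → InAdd T Z

/-- `T` is `R[1]`-cluster tilting: `T` is `R[1]`-rigid and `|T| = |R|`. -/
def IsRelClusterTilting (R T : C) : Prop :=
  IsRelRigid R T ∧ ∃ n : ℕ, NumIndec T n ∧ NumIndec R n

/-- `S` is presilting: `Hom(S, S[i]) = 0` for all `i > 0`. -/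
def IsPresilting (S : C) : Prop := ∀ i : ℤ, 0 < i → ∀ f : S ⟶ S⟦i⟧, f = 0

/-- A predicate on objects defines a thick subcategory: closed under isomorphisms,
shifts, extensions (cones) and direct summands. -/
def IsThickClosed (P : C → Prop) : Prop :=
  (∀ X Y : C, (X ≅ Y) → P X → P Y) ∧
  (∀ (X : C) (n : ℤ), P X → P (X⟦n⟧)) ∧
  (∀ T : Triangle C, T ∈ (distTriang C) → P T.obj₁ → P T.obj₂ → P T.obj₃) ∧
  (∀ X Y : C, IsSummand Y X → P X → P Y)

/-- The smallest thick subcategory of `C` containing `S` is `C` itself. -/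
def ThickGenerates (S : C) : Prop :=
  ∀ P : C → Prop, IsThickClosed P → P S → ∀ X : C, P X

/-- `S` is silting: presilting and `thick S = C`. -/
def IsSilting (S : C) : Prop := IsPresilting S ∧ ThickGenerates S

/-- `C` is `n`-Calabi–Yau: there are bifunctorial isomorphisms
`Hom(X, Y) ≅ D Hom(Y, X[n])`, encoded by a perfect pairing
`Hom(X, Y) × Hom(Y, X[n]) → k` which is natural in both variables. -/
def IsCalabiYau (n : ℤ) : Prop :=
  ∃ pair : ∀ X Y : C, (X ⟶ Y) →ₗ[k] ((Y ⟶ X⟦n⟧) →ₗ[k] k),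
    (∀ X Y : C, Function.Bijective (pair X Y)) ∧
    (∀ (X' X Y : C) (u : X' ⟶ X) (f : X ⟶ Y) (g : Y ⟶ X'⟦n⟧),
      pair X' Y (u ≫ f) g = pair X Y f (g ≫ (shiftFunctor C n).map u)) ∧
    (∀ (X Y Y' : C) (v : Y ⟶ Y') (f : X ⟶ Y) (g : Y' ⟶ X⟦n⟧),
      pair X Y' (f ≫ v) g = pair X Y f (v ≫ g))

/-- `T` is `d`-rigid: `Hom(T, T[i]) = 0` for `i = 1, …, d`. -/
def IsDRigid (d : ℤ) (T : C) : Prop := ∀ i : ℤ, 1 ≤ i → i ≤ d → ∀ f : T ⟶ T⟦i⟧, f = 0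

/-- `T` is maximal `d`-rigid. -/
def IsMaxDRigid (d : ℤ) (T : C) : Prop :=
  IsDRigid d T ∧ ∀ Z : C, IsDRigid d (T ⊞ Z) → InAdd T Z

/-- `T` is a `d`-cluster tilting object. -/
def IsDClusterTilting (d : ℤ) (T : C) : Prop :=
  IsDRigid d T ∧
  ∀ X : C, (∀ i : ℤ, 1 ≤ i → i ≤ d → ∀ f : T ⟶ X⟦i⟧, f = 0) → InAdd T X

/-- `X` is a maximal rigid object. -/
def IsMaxRigidObj (X : C) : Prop :=
  IsRigidObj X ∧ ∀ Z : C, IsRigidObj (X ⊞ Z) → InAdd X Z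

/-- The isomorphism setoid on objects of `C` satisfying a predicate `p`. -/
def objSetoid (p : C → Prop) : Setoid {X : C // p X} where
  r X Y := Nonempty (X.1 ≅ Y.1)
  iseqv := ⟨fun _ => ⟨Iso.refl _⟩, fun ⟨e⟩ => ⟨e.symm⟩, fun ⟨e⟩ ⟨f⟩ => ⟨e.trans f⟩⟩

section Modules

variable (Γ : Type w) [Ring Γ]

/-- `f, g` is a minimal projective presentation `P₁ → P₀ → M → 0`:
both `P`s are projective, the sequence is exact with `g` surjective, and the kernels of
`g` and `f` are superfluous submodules (which encodes minimality). -/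
def IsMinProjPres {P₁ P₀ M : Type w} [AddCommGroup P₁] [Module Γ P₁]
    [AddCommGroup P₀] [Module Γ P₀] [AddCommGroup M] [Module Γ M]
    (f : P₁ →ₗ[Γ] P₀) (g : P₀ →ₗ[Γ] M) : Prop :=
  Module.Projective Γ P₁ ∧ Module.Projective Γ P₀ ∧
  Function.Surjective g ∧ Function.Exact f g ∧
  (∀ K : Submodule Γ P₀, LinearMap.ker g ⊔ K = ⊤ → K = ⊤) ∧
  (∀ K : Submodule Γ P₁, LinearMap.ker f ⊔ K = ⊤ → K = ⊤)

/-- `M` is `τ`-rigid, via the Adachi–Iyama–Reiten criterion: for a minimal projective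
presentation `P₁ →f P₀ → M → 0`, the map `Hom(f, M) : Hom(P₀, M) → Hom(P₁, M)` is
surjective. -/
def IsTauRigid (M : Type w) [AddCommGroup M] [Module Γ M] : Prop :=
  ∀ (P₁ P₀ : Type w) [AddCommGroup P₁] [Module Γ P₁] [AddCommGroup P₀] [Module Γ P₀],
    ∀ (f : P₁ →ₗ[Γ] P₀) (g : P₀ →ₗ[Γ] M), IsMinProjPres Γ f g →
    Function.Surjective (fun h : P₀ →ₗ[Γ] M => h ∘ₗ f)

/-- `(M, P)` is a `τ`-rigid pair: `M ∈ mod Γ` is `τ`-rigid, `P` is finitely generated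
projective and `Hom(P, M) = 0`. -/
def IsTauRigidPair (M P : Type w) [AddCommGroup M] [Module Γ M]
    [AddCommGroup P] [Module Γ P] : Prop :=
  Module.Finite Γ M ∧ IsTauRigid Γ M ∧
  Module.Finite Γ P ∧ Module.Projective Γ P ∧ ∀ h : P →ₗ[Γ] M, h = 0

/-- A module is indecomposable. -/
def ModIndec (M : Type w) [AddCommGroup M] [Module Γ M] : Prop :=
  Nontrivial M ∧ ∀ A B : Submodule Γ M, IsCompl A B → A = ⊥ ∨ B = ⊥

/-- An internal decomposition into indecomposable submodules. -/
def IsModDecomp {M : Type w} [AddCommGroup M] [Module Γ M] {n : ℕ}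
    (f : Fin n → Submodule Γ M) : Prop :=
  DirectSum.IsInternal f ∧ ∀ i, ModIndec Γ (f i)

/-- `|M| = n`: `M` has exactly `n` non-isomorphic indecomposable direct summands. -/
def NumIndecMod (M : Type w) [AddCommGroup M] [Module Γ M] (n : ℕ) : Prop :=
  ∃ (m : ℕ) (f : Fin m → Submodule Γ M) (g : Fin n → Submodule Γ M),
    IsModDecomp Γ f ∧ (∀ i, ModIndec Γ (g i)) ∧
    (∀ i j : Fin n, Nonempty (g i ≃ₗ[Γ] g j) → i = j) ∧
    (∀ i : Fin m, ∃ j : Fin n, Nonempty (f i ≃ₗ[Γ] g j)) ∧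
    (∀ j : Fin n, ∃ i : Fin m, Nonempty (f i ≃ₗ[Γ] g j))

/-- `M` is basic: it decomposes into pairwise non-isomorphic indecomposable submodules. -/
def ModBasic (M : Type w) [AddCommGroup M] [Module Γ M] : Prop :=
  ∃ (n : ℕ) (f : Fin n → Submodule Γ M), IsModDecomp Γ f ∧
    ∀ i j : Fin n, Nonempty (f i ≃ₗ[Γ] f j) → i = j

/-- `(M, P)` is a support `τ`-tilting pair: a `τ`-rigid pair with `|M| + |P| = |Γ|`. -/
def IsSuppTauTiltingPair (M P : Type w) [AddCommGroup M] [Module Γ M]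
    [AddCommGroup P] [Module Γ P] : Prop :=
  IsTauRigidPair Γ M P ∧
  ∃ nM nP nΓ : ℕ, NumIndecMod Γ M nM ∧ NumIndecMod Γ P nP ∧ NumIndecMod Γ Γ nΓ ∧
    nM + nP = nΓ

/-- `M` is a support `τ`-tilting module. -/
def IsSuppTauTilting (M : Type w) [AddCommGroup M] [Module Γ M] : Prop :=
  ∃ P : ModuleCat.{w} Γ, ModBasic Γ P ∧ IsSuppTauTiltingPair Γ M P

/-- `M` has projective dimension at most `1`. -/
def PdLeOne (M : Type w) [AddCommGroup M] [Module Γ M] : Prop :=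
  ∃ (P₁ P₀ : ModuleCat.{w} Γ) (f : P₁ →ₗ[Γ] P₀) (g : ↥P₀ →ₗ[Γ] M),
    Module.Projective Γ P₁ ∧ Module.Projective Γ P₀ ∧
    Function.Injective f ∧ Function.Surjective g ∧ Function.Exact f g

/-- `Ext¹_Γ(M, M) = 0`: every self-extension of `M` splits. -/
def SelfExtSplit (M : Type w) [AddCommGroup M] [Module Γ M] : Prop :=
  ∀ (E : ModuleCat.{w} Γ) (i : M →ₗ[Γ] E) (p : ↥E →ₗ[Γ] M),
    Function.Injective i → Function.Surjective p → Function.Exact i p →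
    ∃ r : ↥E →ₗ[Γ] M, r ∘ₗ i = LinearMap.id

/-- `M` is a (basic) tilting module: `M ∈ mod Γ` is basic with `pd M ≤ 1`,
`Ext¹(M, M) = 0` and `|M| = |Γ|`. -/
def IsTiltingMod (M : Type w) [AddCommGroup M] [Module Γ M] : Prop :=
  Module.Finite Γ M ∧ ModBasic Γ M ∧ PdLeOne Γ M ∧ SelfExtSplit Γ M ∧
  ∃ n : ℕ, NumIndecMod Γ M n ∧ NumIndecMod Γ Γ n

/-- The linear-isomorphism setoid on modules satisfying a predicate `p`. -/
def modSetoid (p : ModuleCat.{w} Γ → Prop) : Setoid {M : ModuleCat.{w} Γ // p M} where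
  r M N := Nonempty (↥M.1 ≃ₗ[Γ] ↥N.1)
  iseqv := ⟨fun _ => ⟨LinearEquiv.refl Γ _⟩, fun ⟨e⟩ => ⟨e.symm⟩, fun ⟨e⟩ ⟨f⟩ => ⟨e.trans f⟩⟩

/-- The componentwise linear-isomorphism setoid on pairs of modules satisfying `p`. -/
def pairSetoid (p : ModuleCat.{w} Γ × ModuleCat.{w} Γ → Prop) :
    Setoid {Mp : ModuleCat.{w} Γ × ModuleCat.{w} Γ // p Mp} where
  r A B := Nonempty (↥A.1.1 ≃ₗ[Γ] ↥B.1.1) ∧ Nonempty (↥A.1.2 ≃ₗ[Γ] ↥B.1.2)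
  iseqv := ⟨fun _ => ⟨⟨LinearEquiv.refl Γ _⟩, ⟨LinearEquiv.refl Γ _⟩⟩,
    fun ⟨⟨e⟩, ⟨f⟩⟩ => ⟨⟨e.symm⟩, ⟨f.symm⟩⟩,
    fun ⟨⟨e⟩, ⟨f⟩⟩ ⟨⟨e'⟩, ⟨f'⟩⟩ => ⟨⟨e.trans e'⟩, ⟨f.trans f'⟩⟩⟩

/-- `(M, P)` is a basic `τ`-rigid pair. -/
def BasicTauRigidPair (Mp : ModuleCat.{w} Γ × ModuleCat.{w} Γ) : Prop :=
  IsTauRigidPair Γ ↥Mp.1 ↥Mp.2 ∧ ModBasic Γ ↥Mp.1 ∧ ModBasic Γ ↥Mp.2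

end Modules

end RelRigid

/-!
Let `R₁ ⟶ R₀ ⟶ X ⟶ R₁[1]` (maps `f, g, h`) present `X`. As `R` is `d`-rigid, `Hom(X, B[i]) = 0`
for `B ∈ add R` and `2 ≤ i ≤ d`, and the long exact sequences then kill `Hom(X, X[i])` for
`2 ≤ i < d`; the last degree `i = d` is dual to `Hom(X, X[1])` under the `(d+1)`-Calabi–Yau
duality.

Conversely, if `X` is `R[1]`-rigid, a map `α : X ⟶ X[1]` with `α ≫ h[1] = 0` factors through
`R₀[1]` and so vanishes. For `d ≥ 2`, `α ≫ h[1]` lies in `Hom(X, R₁[2]) = 0`. For `d = 1`,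
`g ≫ α ≫ h[1] = 0` by `2`-Calabi–Yau duality: its pairing with any `ψ` is the pairing of `α` with
`h[1] ≫ ψ ≫ g[2]`, the shift of a map `X ⟶ X[1]` factoring through `R₀[1]`. Hence `α ≫ h[1]`
factors through `h`, and it vanishes because `R` is rigid.
-/

namespace RelRigid

section Shift

variable {C : Type u} [Category.{v} C] [HasShift C ℤ]

lemma subsingleton_shift_hom_shift {A B : C} (n : ℤ) (h : Subsingleton (A ⟶ B)) :
    Subsingleton (A⟦n⟧ ⟶ B⟦n⟧) :=
  (Equiv.subsingleton_congr
    ((Functor.FullyFaithful.ofFullyFaithful (shiftFunctor C n)).homEquiv (X := A) (Y := B))).mp h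

lemma subsingleton_shift_hom_of_add_eq {A B : C} {a b c : ℤ} (hb : c + a = b)
    (h : Subsingleton (A ⟶ B⟦c⟧)) : Subsingleton (A⟦a⟧ ⟶ B⟦b⟧) :=
  (Iso.homCongr (Iso.refl _) ((shiftFunctorAdd' C c a b hb).app B)).subsingleton_congr.mpr
    (subsingleton_shift_hom_shift a h)

lemma subsingleton_hom_shift_shift {A B : C} {a b c : ℤ} (hc : a + b = c)
    (h : Subsingleton (A ⟶ B⟦c⟧)) : Subsingleton (A ⟶ B⟦a⟧⟦b⟧) :=
  (Iso.homCongr (Iso.refl A) ((shiftFunctorAdd' C a b c hc).app B)).subsingleton_congr.mp h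

end Shift

section Additive

variable {C : Type u} [Category.{v} C] [Preadditive C] [HasFiniteBiproducts C]

lemma subsingleton_hom_of_inAdd {R R' A B : C} (h : Subsingleton (R ⟶ R'))
    (hA : InAdd R A) (hB : InAdd R' B) : Subsingleton (A ⟶ B) := by
  obtain ⟨n, sA, pA, hA⟩ := hA
  obtain ⟨m, sB, pB, hB⟩ := hB
  refine subsingleton_of_forall_eq 0 fun φ => ?_
  have hmid : pA ≫ φ ≫ sB = 0 :=
    biproduct.hom_ext _ _ fun _ => biproduct.hom_ext' _ _ fun _ => h.allEq _ _
  calc φ = sA ≫ (pA ≫ φ ≫ sB) ≫ pB := by simp [reassoc_of% hA, hB]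
    _ = 0 := by rw [hmid, zero_comp, comp_zero]

variable [HasShift C ℤ] [∀ n : ℤ, (shiftFunctor C n).Additive]

lemma InAdd.shift {R A : C} (hA : InAdd R A) (n : ℤ) : InAdd (R⟦n⟧) (A⟦n⟧) := by
  obtain ⟨m, s, p, hsp⟩ := hA
  let e := (shiftFunctor C n).mapBiproduct (fun _ : Fin m => R)
  exact ⟨m, s⟦n⟧' ≫ e.hom, e.inv ≫ p⟦n⟧', by simp [← Functor.map_comp, hsp]⟩

lemma IsDRigid.subsingleton_hom_shift {d i : ℤ} {R A B : C} (hR : IsDRigid d R)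
    (hA : InAdd R A) (hB : InAdd R B) (h1 : 1 ≤ i) (hi : i ≤ d) : Subsingleton (A ⟶ B⟦i⟧) :=
  subsingleton_hom_of_inAdd (subsingleton_of_forall_eq 0 (hR i h1 hi)) hA (hB.shift i)

end Additive

section Triangulated

variable {C : Type u} [Category.{v} C] [Preadditive C] [HasZeroObject C] [HasShift C ℤ]
  [∀ n : ℤ, (shiftFunctor C n).Additive] [Pretriangulated C]

lemma subsingleton_obj₃_hom_of_distTriang {T : Triangle C} (hT : T ∈ distTriang C) {Z : C}
    (h₂ : Subsingleton (T.obj₂ ⟶ Z)) (h₁ : Subsingleton (T.obj₁⟦(1 : ℤ)⟧ ⟶ Z)) :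
    Subsingleton (T.obj₃ ⟶ Z) :=
  subsingleton_of_forall_eq 0 fun φ => by
    obtain ⟨u, rfl⟩ := Triangle.yoneda_exact₃ T hT φ (h₂.allEq _ _)
    rw [h₁.allEq u 0, comp_zero]

lemma subsingleton_hom_obj₃_of_distTriang {T : Triangle C} (hT : T ∈ distTriang C) {W : C}
    (h₂ : Subsingleton (W ⟶ T.obj₂)) (h₁ : Subsingleton (W ⟶ T.obj₁⟦(1 : ℤ)⟧)) :
    Subsingleton (W ⟶ T.obj₃) :=
  subsingleton_of_forall_eq 0 fun φ => by
    obtain ⟨u, rfl⟩ := Triangle.coyoneda_exact₃ T hT φ (h₁.allEq _ _)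
    rw [h₂.allEq u 0, zero_comp]

variable [HasFiniteBiproducts C]

lemma InPr.subsingleton_hom_shift {d i : ℤ} {R X B : C} (hR : IsDRigid d R) (hX : InPr R X)
    (hB : InAdd R B) (h2 : 2 ≤ i) (hi : i ≤ d) : Subsingleton (X ⟶ B⟦i⟧) := by
  obtain ⟨R₁, R₀, hR₁, hR₀, f, g, h, hT⟩ := hX
  exact subsingleton_obj₃_hom_of_distTriang hT (hR.subsingleton_hom_shift hR₀ hB (by omega) hi)
    (subsingleton_shift_hom_of_add_eq (c := i - 1) (by omega)
      (hR.subsingleton_hom_shift hR₁ hB (by omega) (by omega)))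

lemma InPr.subsingleton_hom_shift_of_inPr {d i : ℤ} {R X Y : C} (hR : IsDRigid d R)
    (hX : InPr R X) (hY : InPr R Y) (h2 : 2 ≤ i) (hi : i < d) : Subsingleton (X ⟶ Y⟦i⟧) := by
  obtain ⟨R₁, R₀, hR₁, hR₀, f, g, h, hT⟩ := hY
  exact subsingleton_hom_obj₃_of_distTriang (Triangle.shift_distinguished _ hT i)
    (hX.subsingleton_hom_shift hR hR₀ h2 hi.le)
    (subsingleton_hom_shift_shift (c := i + 1) rfl (hX.subsingleton_hom_shift hR hR₁ (by omega) hi))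

end Triangulated

section CalabiYau

variable {k : Type w} [Field k] {C : Type u} [Category.{v} C] [Preadditive C] [Linear k C]
  [HasShift C ℤ]

lemma IsCalabiYau.comp_comp_eq_zero {n a b : ℤ} (hCY : IsCalabiYau (k := k) (C := C) n)
    (hab : a + b = n) {X' X Y Y' : C} (u : X' ⟶ X) (f : X ⟶ Y) (v : Y ⟶ Y')
    (h : ∀ ψ : Y' ⟶ X'⟦a⟧⟦b⟧, v ≫ ψ ≫ u⟦a⟧'⟦b⟧' = 0) : u ≫ f ≫ v = 0 := by
  obtain ⟨pair, hbij, hnat₁, hnat₂⟩ := hCY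
  let e := shiftFunctorAdd' C a b n hab
  have hv : ∀ ψ : Y' ⟶ X'⟦n⟧, v ≫ ψ ≫ u⟦n⟧' = 0 := fun ψ => by
    rw [← cancel_mono (e.hom.app X), zero_comp]
    simpa only [Category.assoc, NatTrans.naturality, Functor.comp_map] using h (ψ ≫ e.hom.app X')
  refine (hbij X' Y').injective (LinearMap.ext fun ψ => ?_)
  rw [map_zero, LinearMap.zero_apply, hnat₁, hnat₂, hv, map_zero]

lemma IsCalabiYau.subsingleton_hom {n a b : ℤ} (hCY : IsCalabiYau (k := k) (C := C) n)
    (hab : a + b = n) {X Y : C} (h : Subsingleton (Y ⟶ X⟦a⟧⟦b⟧)) : Subsingleton (X ⟶ Y) :=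
  subsingleton_of_forall_eq 0 fun f => by
    simpa using hCY.comp_comp_eq_zero hab (𝟙 X) f (𝟙 Y) fun _ => h.allEq _ _

variable [HasZeroObject C] [∀ n : ℤ, (shiftFunctor C n).Additive] [Pretriangulated C]
  [HasFiniteBiproducts C]

lemma IsRelRigid.isRigidObj {d : ℤ} (hd : 1 ≤ d) (hCY : IsCalabiYau (k := k) (C := C) (d + 1))
    {R X : C} (hR : IsDRigid d R) (hX : InPr R X) (hrel : IsRelRigid R X) : IsRigidObj X := by
  obtain ⟨R₁, R₀, hR₁, hR₀, f, g, h, hT⟩ := id hX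
  intro α
  suffices hα : α ≫ h⟦(1 : ℤ)⟧' = 0 by
    obtain ⟨β, hβ⟩ := Triangle.coyoneda_exact₁ _ (rot_of_distTriang _ (rot_of_distTriang _ hT)) α hα
    exact hrel α ⟨_, hR₀.shift 1, β, _, hβ.symm⟩
  obtain hd2 | rfl : 2 ≤ d ∨ d = 1 := by omega
  · exact (subsingleton_hom_shift_shift (c := 2) rfl
      (hX.subsingleton_hom_shift hR hR₁ le_rfl hd2)).allEq _ _
  have hgα : g ≫ α ≫ h⟦(1 : ℤ)⟧' = 0 := hCY.comp_comp_eq_zero rfl g α (h⟦1⟧') fun ψ => by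
    obtain ⟨ρ, rfl⟩ := (shiftFunctor C (1 : ℤ)).map_surjective ψ
    have : h ≫ ρ ≫ g⟦(1 : ℤ)⟧' = 0 := hrel _ ⟨_, hR₀.shift 1, h ≫ ρ, g⟦1⟧', Category.assoc _ _ _⟩
    simp only [← Functor.map_comp, this, Functor.map_zero]
  obtain ⟨u, hu⟩ := Triangle.yoneda_exact₃ _ hT _ hgα
  have hu0 : u = 0 :=
    (subsingleton_shift_hom_shift 1 (hR.subsingleton_hom_shift hR₁ hR₁ le_rfl le_rfl)).allEq _ _
  rw [hu, hu0]
  exact comp_zero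

lemma IsRigidObj.isDRigid {d : ℤ} (hCY : IsCalabiYau (k := k) (C := C) (d + 1)) {R X : C}
    (hR : IsDRigid d R) (hX : InPr R X) (hrig : IsRigidObj X) : IsDRigid d X := by
  intro i h1 hi φ
  obtain rfl | hid := eq_or_lt_of_le hi
  · exact (hCY.subsingleton_hom (a := 1) (by omega)
      (subsingleton_shift_hom_shift i (subsingleton_of_forall_eq 0 hrig))).allEq _ _
  obtain rfl | h2 := eq_or_lt_of_le h1
  · exact hrig φ
  · exact (hX.subsingleton_hom_shift_of_inPr hR hX h2 hid).allEq _ _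

end CalabiYau

variable {k : Type w} [Field k] [IsAlgClosed k]
variable {C : Type u} [Category.{v} C] [Preadditive C] [CategoryTheory.Linear k C]
  [HasZeroObject C] [HasShift C ℤ] [∀ n : ℤ, (shiftFunctor C n).Additive]
  [Pretriangulated C] [HasFiniteBiproducts C] [IsIdempotentComplete C]
  [∀ X Y : C, Module.Finite k (X ⟶ Y)]

theorem statement16_general (d : ℤ) (hd : 1 ≤ d)
    (hCY : IsCalabiYau (k := k) (C := C) (d + 1))
    (R : C) (hR : IsDRigid d R) (X : C) (hX : InPr R X) :
    (IsRelRigid R X ↔ IsRigidObj X) ∧ (IsRigidObj X ↔ IsDRigid d X) :=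
  ⟨⟨IsRelRigid.isRigidObj hd hCY hR hX, fun hrig φ _ => hrig φ⟩,
    ⟨IsRigidObj.isDRigid hCY hR hX, fun hD => hD 1 le_rfl hd⟩⟩

/-- **Theorem 4.2.**  Let `d ≥ 1`, `C` a `(d+1)`-Calabi–Yau triangulated category, `R` a
basic `d`-rigid object and `X ∈ pr(R)`.  Then the following are equivalent:
`X` is `R[1]`-rigid; `X` is rigid; `X` is `d`-rigid. -/
theorem statement16 (d : ℤ) (hd : 1 ≤ d)
    (hCY : IsCalabiYau (k := k) (C := C) (d + 1))
    (R : C) (hRbasic : IsBasic R) (hR : IsDRigid d R) (X : C) (hX : InPr R X) :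
    (IsRelRigid R X ↔ IsRigidObj X) ∧ (IsRigidObj X ↔ IsDRigid d X) :=
  statement16_general d hd hCY R hR X hX

end RelRigid
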